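/- arXiv:1310.0324 — 2 statements merged into one kernel-verified Lean document; each statement's English description precedes it below -/
import Mathlib

section
/- Let θ ∈ SL₂(ℤ) with trace(θ) ∈ {−1, 0, 1}, and let Λ ∈ GL₂(ℤ) be any reversing symmetry of θ (i.e. ΛθΛ⁻¹ = θ⁻¹). Then the reversing symmetry group R(θ) := {χ ∈ GL₂(ℤ) : χθχ⁻¹ = θ or χθχ⁻¹ = θ⁻¹} equals S(θ) ∪ Λ·S(θ), so S(θ) has index 2 in R(θ). Explicitly, if trace(θ) = 0 then R(θ) = {±I₂, ±θ, ±Λ, ±Λθ} (a dihedral group of order 8), and if trace(θ) = ±1 then R(θ) = {±I₂, ±θ, ±θ², ±Λ, ±Λθ, ±Λθ²} (a dihedral group of order 12). -/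
/-!
An elliptic θ = !![p, q; r, s] ∈ SL₂(ℤ), i.e. (tr θ)² < 4, has q r < 0, so q ≠ 0. A matrix χ
commuting with θ satisfies q • χ = X • 1 + χ₀₁ • θ for an integer X, and taking determinant and
trace gives 4 q² det χ = q² (tr χ)² + (4 - (tr θ)²) χ₀₁². This forces det χ = 1 and
χ₀₁ ∈ {0, ±q} (any other case would make 3 a rational square), so χ = x • 1 + u • θ with integers
x, u. Then det χ = x² + x u tr θ + u² is the norm form of ℤ[i] or ℤ[ζ₃], whose units give exactly
±1, ±θ, ±θ².

Multiplying by a reversing symmetry Λ exchanges symmetries and reversing symmetries, so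
R(θ) = S(θ) ∪ Λ S(θ); and Λ ∉ S(θ) because an elliptic θ is not an involution.
-/

open Matrix

theorem Int.eq_zero_of_sq_eq_three_mul_sq {x y : ℤ} (h : x ^ 2 = 3 * y ^ 2) : y = 0 := by
  by_contra hy
  have h3 : IsSquare ((3 : ℤ) : ℚ) := ⟨x / y, by field_simp; exact_mod_cast h.symm⟩
  obtain ⟨r, hr⟩ := Rat.isSquare_intCast_iff.mp h3
  have : r ≤ 1 := by nlinarith
  have : -1 ≤ r := by nlinarith
  interval_cases r <;> omega

theorem Int.sq_eq_zero_or_one_of_sq_lt_four {t : ℤ} (ht : t ^ 2 < 4) :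
    t ^ 2 = 0 ∨ t ^ 2 = 1 := by
  have : -1 ≤ t := by nlinarith
  have : t ≤ 1 := by nlinarith
  interval_cases t <;> norm_num

theorem Int.eq_zero_or_eq_or_eq_neg_of_mul_sq_eq {t m q b : ℤ} (ht : t ^ 2 < 4) (hq : q ≠ 0)
    (h : (4 - m ^ 2) * q ^ 2 = (4 - t ^ 2) * b ^ 2) : b = 0 ∨ b = q ∨ b = -q := by
  have hm : m ^ 2 = 0 ∨ m ^ 2 = 1 ∨ m ^ 2 = 4 := by
    have : m ^ 2 ≤ 4 := by nlinarith [sq_pos_of_ne_zero hq, sq_nonneg b]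
    have : -2 ≤ m := by nlinarith
    have : m ≤ 2 := by nlinarith
    interval_cases m <;> norm_num
  rcases hm with hm | hm | hm <;> rcases Int.sq_eq_zero_or_one_of_sq_lt_four ht with ht | ht <;>
    rw [hm, ht] at h
  · exact Or.inr (sq_eq_sq_iff_eq_or_eq_neg.1 (by linarith))
  · exact Or.inl (Int.eq_zero_of_sq_eq_three_mul_sq (x := 2 * q) (by linarith))
  · exact absurd (Int.eq_zero_of_sq_eq_three_mul_sq (x := 2 * b) (by linarith)) hq
  · exact Or.inr (sq_eq_sq_iff_eq_or_eq_neg.1 (by linarith))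
  all_goals exact Or.inl (pow_eq_zero_iff two_ne_zero |>.1 (by linarith))

theorem Int.sq_add_mul_add_sq_eq_one {t x u : ℤ} (ht : t ^ 2 < 4)
    (h : x ^ 2 + x * u * t + u ^ 2 = 1) :
    x = 1 ∧ u = 0 ∨ x = -1 ∧ u = 0 ∨ x = 0 ∧ u = 1 ∨ x = 0 ∧ u = -1 ∨
      x = -1 ∧ u = t ∨ x = 1 ∧ u = -t := by
  have : -1 ≤ t := by nlinarith
  have : t ≤ 1 := by nlinarith
  have : 3 * x ^ 2 ≤ 4 := by nlinarith [sq_nonneg (2 * u + x * t)]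
  have : 3 * u ^ 2 ≤ 4 := by nlinarith [sq_nonneg (2 * x + u * t)]
  have : -1 ≤ x := by nlinarith
  have : x ≤ 1 := by nlinarith
  have : -1 ≤ u := by nlinarith
  have : u ≤ 1 := by nlinarith
  interval_cases t <;> interval_cases x <;> interval_cases u <;> simp_all

namespace Matrix

section Reversing

variable {n R : Type*} [Fintype n] [DecidableEq n] [CommRing R]

def symmetries (θ : Matrix n n R) : Set (Matrix n n R) :=
  {χ | IsUnit χ.det ∧ χ * θ = θ * χ}

def reversingSymmetries (θ : Matrix n n R) : Set (Matrix n n R) :=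
  {χ | IsUnit χ.det ∧ (χ * θ * χ⁻¹ = θ ∨ χ * θ * χ⁻¹ = θ⁻¹)}

theorem conj_eq_iff_mul_eq_mul {A B C : Matrix n n R} (hA : IsUnit A.det) :
    A * B * A⁻¹ = C ↔ A * B = C * A := by
  constructor
  · rintro rfl
    rw [nonsing_inv_mul_cancel_right _ _ hA]
  · rintro h
    rw [h, mul_nonsing_inv_cancel_right _ _ hA]

theorem reversingSymmetries_eq_union {θ Λ : Matrix n n R} (hΛ : IsUnit Λ.det)
    (hrev : Λ * θ * Λ⁻¹ = θ⁻¹) :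
    reversingSymmetries θ = symmetries θ ∪ (Λ * ·) '' symmetries θ := by
  have hΛθ : Λ * θ = θ⁻¹ * Λ := (conj_eq_iff_mul_eq_mul hΛ).1 hrev
  ext χ
  constructor
  · rintro ⟨hχ, hfix | hinv⟩
    · exact Or.inl ⟨hχ, (conj_eq_iff_mul_eq_mul hχ).1 hfix⟩
    · refine Or.inr ⟨Λ⁻¹ * χ, ⟨?_, ?_⟩, mul_nonsing_inv_cancel_left _ _ hΛ⟩
      · rw [det_mul]
        exact (isUnit_nonsing_inv_det Λ hΛ).mul hχ
      · calc Λ⁻¹ * χ * θ = Λ⁻¹ * (θ⁻¹ * χ) := by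
              rw [mul_assoc, (conj_eq_iff_mul_eq_mul hχ).1 hinv]
          _ = Λ⁻¹ * (Λ * θ * Λ⁻¹) * χ := by rw [hrev, mul_assoc]
          _ = θ * (Λ⁻¹ * χ) := by simp only [mul_assoc, nonsing_inv_mul_cancel_left _ _ hΛ]
  · rintro (⟨hχ, hcomm⟩ | ⟨ψ, ⟨hψ, hcomm⟩, rfl⟩)
    · exact ⟨hχ, Or.inl ((conj_eq_iff_mul_eq_mul hχ).2 hcomm)⟩
    · have hΛψ : IsUnit (Λ * ψ).det := by
        rw [det_mul]
        exact hΛ.mul hψ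
      refine ⟨hΛψ, Or.inr ((conj_eq_iff_mul_eq_mul hΛψ).2 ?_)⟩
      rw [mul_assoc, hcomm, ← mul_assoc, hΛθ, mul_assoc]

theorem not_mem_symmetries_of_conj_eq_inv {θ Λ : Matrix n n R} (hθ : θ⁻¹ ≠ θ)
    (hΛ : IsUnit Λ.det) (hrev : Λ * θ * Λ⁻¹ = θ⁻¹) : Λ ∉ symmetries θ := by
  rintro ⟨-, hcomm⟩
  rw [hcomm, mul_nonsing_inv_cancel_right _ _ hΛ] at hrev
  exact hθ hrev.symm

end Reversing

section FinTwo

variable {R : Type*} [CommRing R]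

theorem sq_eq_trace_smul_sub_det_smul (θ : Matrix (Fin 2) (Fin 2) R) :
    θ ^ 2 = θ.trace • θ - θ.det • 1 := by
  rw [sq, trace_fin_two, det_fin_two]
  ext i j
  fin_cases i <;> fin_cases j <;> simp [mul_apply, Fin.sum_univ_two] <;> ring

theorem smul_eq_smul_one_add_smul_of_commute {θ χ : Matrix (Fin 2) (Fin 2) R}
    (h : χ * θ = θ * χ) :
    θ 0 1 • χ = (θ 0 1 * χ 0 0 - χ 0 1 * θ 0 0) • 1 + χ 0 1 • θ := by
  have h00 := congrFun₂ h 0 0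
  have h01 := congrFun₂ h 0 1
  simp only [mul_apply, Fin.sum_univ_two] at h00 h01
  ext i j
  fin_cases i <;> fin_cases j <;> simp
  · ring
  · linear_combination -h00
  · linear_combination -h01

theorem det_smul_one_add_smul (x y : R) (θ : Matrix (Fin 2) (Fin 2) R) :
    (x • 1 + y • θ).det = x ^ 2 + x * y * θ.trace + y ^ 2 * θ.det := by
  simp [det_fin_two, trace_fin_two]
  ring

theorem trace_smul_one_add_smul (x y : R) (θ : Matrix (Fin 2) (Fin 2) R) :
    (x • 1 + y • θ).trace = 2 * x + y * θ.trace := by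
  simp [trace_fin_two]
  ring

theorem four_mul_sq_mul_det_eq_of_commute {θ χ : Matrix (Fin 2) (Fin 2) R} (hθ : θ.det = 1)
    (h : χ * θ = θ * χ) :
    4 * θ 0 1 ^ 2 * χ.det = θ 0 1 ^ 2 * χ.trace ^ 2 + (4 - θ.trace ^ 2) * χ 0 1 ^ 2 := by
  set X := θ 0 1 * χ 0 0 - χ 0 1 * θ 0 0
  have hχ := smul_eq_smul_one_add_smul_of_commute h
  have hdet := congrArg det hχ
  have htr := congrArg trace hχ
  rw [det_smul, det_smul_one_add_smul, hθ] at hdet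
  rw [trace_smul, trace_smul_one_add_smul, smul_eq_mul] at htr
  simp only [Fintype.card_fin, mul_one] at hdet
  linear_combination 4 * hdet - (θ 0 1 * χ.trace + 2 * X + χ 0 1 * θ.trace) * htr

end FinTwo

section Elliptic

variable {θ : Matrix (Fin 2) (Fin 2) ℤ}

theorem apply_zero_one_ne_zero_of_trace_sq_lt_four (hθ : θ.det = 1) (ht : θ.trace ^ 2 < 4) :
    θ 0 1 ≠ 0 := by
  intro hq
  rw [det_fin_two, hq] at hθ
  rw [trace_fin_two] at ht
  nlinarith [sq_nonneg (θ 0 0 - θ 1 1)]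

theorem det_eq_one_of_commute {χ : Matrix (Fin 2) (Fin 2) ℤ} (hθ : θ.det = 1)
    (ht : θ.trace ^ 2 < 4) (hχ : IsUnit χ.det) (h : χ * θ = θ * χ) : χ.det = 1 := by
  have hq := apply_zero_one_ne_zero_of_trace_sq_lt_four hθ ht
  have key := four_mul_sq_mul_det_eq_of_commute hθ h
  rcases Int.isUnit_iff.1 hχ with h1 | h1
  · exact h1
  · rw [h1] at key
    nlinarith [sq_pos_of_ne_zero hq, sq_nonneg (χ 0 1), sq_nonneg χ.trace]

theorem exists_eq_smul_one_add_smul_of_commute {χ : Matrix (Fin 2) (Fin 2) ℤ}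
    (hθ : θ.det = 1) (ht : θ.trace ^ 2 < 4) (hχ : IsUnit χ.det) (h : χ * θ = θ * χ) :
    ∃ x u : ℤ, χ = x • 1 + u • θ := by
  have hq := apply_zero_one_ne_zero_of_trace_sq_lt_four hθ ht
  have key := four_mul_sq_mul_det_eq_of_commute hθ h
  rw [det_eq_one_of_commute hθ ht hχ h] at key
  obtain ⟨u, hu⟩ : ∃ u : ℤ, χ 0 1 = u * θ 0 1 := by
    rcases Int.eq_zero_or_eq_or_eq_neg_of_mul_sq_eq (m := χ.trace) (b := χ 0 1) ht hq
      (by linear_combination key) with hb | hb | hb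
    exacts [⟨0, by simp [hb]⟩, ⟨1, by simp [hb]⟩, ⟨-1, by simp [hb]⟩]
  refine ⟨χ 0 0 - u * θ 0 0, u, smul_right_injective _ hq ?_⟩
  simp only [smul_eq_smul_one_add_smul_of_commute h, hu, smul_add, smul_smul]
  congr 2 <;> ring

theorem symmetries_eq_of_trace_sq_lt_four (hθ : θ.det = 1) (ht : θ.trace ^ 2 < 4) :
    symmetries θ = {1, -1, θ, -θ, θ ^ 2, -θ ^ 2} := by
  have hsq : θ ^ 2 = -1 • 1 + θ.trace • θ := by
    rw [sq_eq_trace_smul_sub_det_smul, hθ]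
    abel
  ext χ
  constructor
  · rintro ⟨hχ, h⟩
    have hdet := det_eq_one_of_commute hθ ht hχ h
    obtain ⟨x, u, rfl⟩ := exists_eq_smul_one_add_smul_of_commute hθ ht hχ h
    rw [det_smul_one_add_smul, hθ, mul_one] at hdet
    rcases Int.sq_add_mul_add_sq_eq_one ht hdet with
      ⟨rfl, rfl⟩ | ⟨rfl, rfl⟩ | ⟨rfl, rfl⟩ | ⟨rfl, rfl⟩ | ⟨rfl, rfl⟩ | ⟨rfl, rfl⟩ <;>
      simp [hsq, add_comm]
  · have hθ2 : (θ ^ 2).det = 1 := by rw [det_pow, hθ, one_pow]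
    simp only [Set.mem_insert_iff, Set.mem_singleton_iff]
    rintro (h | h | h | h | h | h) <;> rw [h]
    · exact ⟨by simp, Commute.one_left θ⟩
    · exact ⟨by simp [det_neg], (Commute.one_left θ).neg_left⟩
    · exact ⟨by simp [hθ], Commute.refl θ⟩
    · exact ⟨by simp [det_neg, hθ], (Commute.refl θ).neg_left⟩
    · exact ⟨by simp [hθ2], (Commute.refl θ).pow_left 2⟩
    · exact ⟨by simp [det_neg, hθ2], ((Commute.refl θ).pow_left 2).neg_left⟩

theorem inv_ne_self_of_trace_sq_lt_four (hθ : θ.det = 1) (ht : θ.trace ^ 2 < 4) : θ⁻¹ ≠ θ := by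
  intro h
  have hsq : θ ^ 2 = 1 := by
    rw [sq]
    nth_rewrite 1 [← h]
    exact nonsing_inv_mul θ (by simp [hθ])
  have htr := congrArg trace (sq_eq_trace_smul_sub_det_smul θ)
  rw [hsq, hθ, trace_sub, trace_smul, one_smul, trace_one, smul_eq_mul] at htr
  simp only [Fintype.card_fin, Nat.cast_ofNat] at htr
  nlinarith

theorem reversingSymmetries_eq_of_trace_sq_lt_four {Λ : Matrix (Fin 2) (Fin 2) ℤ}
    (hθ : θ.det = 1) (ht : θ.trace ^ 2 < 4) (hΛ : IsUnit Λ.det) (hrev : Λ * θ * Λ⁻¹ = θ⁻¹) :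
    reversingSymmetries θ = {1, -1, θ, -θ, θ ^ 2, -θ ^ 2, Λ, -Λ, Λ * θ, -(Λ * θ),
      Λ * θ ^ 2, -(Λ * θ ^ 2)} := by
  rw [reversingSymmetries_eq_union hΛ hrev, symmetries_eq_of_trace_sq_lt_four hθ ht]
  simp only [Set.image_insert_eq, Set.image_singleton, mul_one, mul_neg, Set.insert_union,
    Set.singleton_union]

theorem reversingSymmetries_eq_of_trace_eq_zero {Λ : Matrix (Fin 2) (Fin 2) ℤ}
    (hθ : θ.det = 1) (h0 : θ.trace = 0) (hΛ : IsUnit Λ.det) (hrev : Λ * θ * Λ⁻¹ = θ⁻¹) :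
    reversingSymmetries θ = {1, -1, θ, -θ, Λ, -Λ, Λ * θ, -(Λ * θ)} := by
  have hsq : θ ^ 2 = -1 := by simp [sq_eq_trace_smul_sub_det_smul, h0, hθ]
  rw [reversingSymmetries_eq_of_trace_sq_lt_four hθ (by simp [h0]) hΛ hrev, hsq]
  ext χ
  simp only [Set.mem_insert_iff, Set.mem_singleton_iff, mul_neg, mul_one, neg_neg]
  tauto

end Elliptic

end Matrix

/-- For θ ∈ SL₂(ℤ) with trace in {−1,0,1} and Λ ∈ GL₂(ℤ) any reversing
symmetry of θ (ΛθΛ⁻¹ = θ⁻¹), the reversing symmetry group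
R(θ) = {χ ∈ GL₂(ℤ) : χθχ⁻¹ = θ or χθχ⁻¹ = θ⁻¹} equals S(θ) ∪ Λ·S(θ), where
S(θ) = {χ ∈ GL₂(ℤ) : χθ = θχ}; moreover Λ ∉ S(θ), so S(θ) has index 2 in R(θ).
Explicitly, R(θ) = {±I₂, ±θ, ±Λ, ±Λθ} when trace θ = 0, and
R(θ) = {±I₂, ±θ, ±θ², ±Λ, ±Λθ, ±Λθ²} when trace θ = ±1. -/
theorem stmt_8 (θ Λ : Matrix (Fin 2) (Fin 2) ℤ) (hdet : θ.det = 1)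
    (htr : θ.trace = -1 ∨ θ.trace = 0 ∨ θ.trace = 1)
    (hΛdet : Λ.det = 1 ∨ Λ.det = -1) (hΛ : Λ * θ * Λ⁻¹ = θ⁻¹) :
    ({χ : Matrix (Fin 2) (Fin 2) ℤ | (χ.det = 1 ∨ χ.det = -1) ∧
        (χ * θ * χ⁻¹ = θ ∨ χ * θ * χ⁻¹ = θ⁻¹)} =
      {χ : Matrix (Fin 2) (Fin 2) ℤ | (χ.det = 1 ∨ χ.det = -1) ∧ χ * θ = θ * χ} ∪
        (fun χ => Λ * χ) ''
          {χ : Matrix (Fin 2) (Fin 2) ℤ | (χ.det = 1 ∨ χ.det = -1) ∧ χ * θ = θ * χ}) ∧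
    Λ ∉ {χ : Matrix (Fin 2) (Fin 2) ℤ | (χ.det = 1 ∨ χ.det = -1) ∧ χ * θ = θ * χ} ∧
    (θ.trace = 0 →
      {χ : Matrix (Fin 2) (Fin 2) ℤ | (χ.det = 1 ∨ χ.det = -1) ∧
          (χ * θ * χ⁻¹ = θ ∨ χ * θ * χ⁻¹ = θ⁻¹)} =
        ({1, -1, θ, -θ, Λ, -Λ, Λ * θ, -(Λ * θ)} : Set (Matrix (Fin 2) (Fin 2) ℤ))) ∧
    (θ.trace = -1 ∨ θ.trace = 1 →
      {χ : Matrix (Fin 2) (Fin 2) ℤ | (χ.det = 1 ∨ χ.det = -1) ∧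
          (χ * θ * χ⁻¹ = θ ∨ χ * θ * χ⁻¹ = θ⁻¹)} =
        ({1, -1, θ, -θ, θ ^ 2, -θ ^ 2, Λ, -Λ, Λ * θ, -(Λ * θ),
          Λ * θ ^ 2, -(Λ * θ ^ 2)} : Set (Matrix (Fin 2) (Fin 2) ℤ))) := by
  have ht : θ.trace ^ 2 < 4 := by rcases htr with h | h | h <;> rw [h] <;> norm_num
  have hΛu : IsUnit Λ.det := Int.isUnit_iff.2 hΛdet
  simp only [← Int.isUnit_iff]
  exact ⟨reversingSymmetries_eq_union hΛu hΛ,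
    not_mem_symmetries_of_conj_eq_inv (inv_ne_self_of_trace_sq_lt_four hdet ht) hΛu hΛ,
    fun h0 => reversingSymmetries_eq_of_trace_eq_zero hdet h0 hΛu hΛ,
    fun _ => reversingSymmetries_eq_of_trace_sq_lt_four hdet ht hΛu hΛ⟩
end

section
/- Let θ ∈ SL₂(ℤ) with trace(θ) ∈ {−2, −1, 0, 1} and let A, B, C be the 4×4 matrices generating D_m (A with top-left block θ, A₃₃ = A₃₄ = A₄₄ = 1, other entries 0; B = I₄ + E₁₄; C = I₄ + E₂₄). Let g₁ = A·B^{β₁}C^{γ₁}, g₂ = B^{β₂}C^{γ₂}, g₃ = B^{β₃}C^{γ₃} with βᵢ, γᵢ ∈ ℤ, and define τ₁ = (β₂, γ₂)ᵀ, τ₂ = (β₃, γ₃)ᵀ, τ₃ = θ·τ₁, τ₄ = θ·τ₂ ∈ ℤ². Then the subgroup generated by {g₁, g₂, g₃} equals D_m if and only if: (i) gcd of the first components of τ₁, τ₂, τ₃, τ₄ equals 1; (ii) gcd of the second components of τ₁, τ₂, τ₃, τ₄ equals 1; and (iii) gcd of the six cross products τᵢ ∧ τⱼ := τ_{1i}τ_{2j}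 − τ_{2i}τ_{1j} over 1 ≤ i < j ≤ 4 equals 1. -/
/-!
`D_m` is the semidirect product `ℤ² ⋊_θ ℤ`: `B` and `C` generate the translations `u(ℤ²)` and
conjugation by `A` acts on them by `θ`, hence so does conjugation by `g₁`. Since
`θ² = (tr θ) θ - 1`, the lattice `Λ` spanned by `τ₁, τ₂, θτ₁, θτ₂` is stable under `θ` and `θ⁻¹`,
so `g₁` normalizes `u(Λ)` and every element of `⟨g₁, g₂, g₃⟩` is `g₁ⁿ u(v)` with `v ∈ Λ`. The
exponent `n` can be read off row 2 of the matrix, so the translations in `⟨g₁, g₂, g₃⟩` are exactly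
`u(Λ)`, and the subgroup is `D_m` iff `Λ = ℤ²`. Finally, vectors span `R²` iff their `2 × 2` minors
generate the unit ideal (Cramer's rule and bilinearity), which for the `τᵢ` is condition (iii);
(i) and (ii) follow from it because every minor lies in the ideal generated by the first (or the
second) coordinates.
-/

open Matrix Multiplicative

section Wedge

variable {R : Type*} [CommRing R]

def wedge : (R × R) →ₗ[R] (R × R) →ₗ[R] R :=
  LinearMap.mk₂ R (fun v w => v.1 * w.2 - v.2 * w.1)
    (fun _ _ _ => by simp only [Prod.fst_add, Prod.snd_add]; ring)
    (fun _ _ _ => by simp only [Prod.smul_fst, Prod.smul_snd, smul_eq_mul]; ring)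
    (fun _ _ _ => by simp only [Prod.fst_add, Prod.snd_add]; ring)
    (fun _ _ _ => by simp only [Prod.smul_fst, Prod.smul_snd, smul_eq_mul]; ring)

@[simp]
lemma wedge_apply (v w : R × R) : wedge v w = v.1 * w.2 - v.2 * w.1 := rfl

lemma wedge_self (v : R × R) : wedge v v = 0 := by
  simp only [wedge_apply]; ring

lemma wedge_swap (v w : R × R) : wedge w v = -wedge v w := by
  simp only [wedge_apply]; ring

/-- Cramer's rule. -/
lemma wedge_smul_mem {L : Submodule R (R × R)} {v w : R × R} (hv : v ∈ L) (hw : w ∈ L)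
    (x : R × R) : wedge v w • x ∈ L := by
  have hx : wedge v w • x = (x.1 * w.2 - x.2 * w.1) • v + (x.2 * v.1 - x.1 * v.2) • w := by
    ext <;> simp only [wedge_apply, Prod.smul_fst, Prod.smul_snd, Prod.fst_add, Prod.snd_add,
      smul_eq_mul] <;> ring
  rw [hx]
  exact add_mem (L.smul_mem _ hv) (L.smul_mem _ hw)

theorem span_eq_top_iff_forall_wedge_mem (S : Set (R × R)) :
    Submodule.span R S = ⊤ ↔ ∀ I : Ideal R, (∀ v ∈ S, ∀ w ∈ S, wedge v w ∈ I) → 1 ∈ I := by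
  constructor
  · intro hS I hI
    have hle : Submodule.map₂ wedge (Submodule.span R S) (Submodule.span R S) ≤ I := by
      rw [Submodule.map₂_span_span]
      exact Submodule.span_le.2 (Set.image2_subset_iff.2 hI)
    simpa using hle (Submodule.apply_mem_map₂ wedge (hS ▸ Submodule.mem_top : ((1, 0) : R × R) ∈ _)
      (hS ▸ Submodule.mem_top : ((0, 1) : R × R) ∈ _))
  · intro h
    have hcolon := h ((Submodule.span R S).colon Set.univ) fun v hv w hw =>
      Submodule.mem_colon.2 fun x _ =>
        wedge_smul_mem (Submodule.subset_span hv) (Submodule.subset_span hw) x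
    exact Submodule.eq_top_iff'.2 fun x => by
      simpa using Submodule.mem_colon.1 hcolon x (Set.mem_univ x)

lemma wedge_mem_of_fst_mem {I : Ideal R} {v w : R × R} (hv : v.1 ∈ I) (hw : w.1 ∈ I) :
    wedge v w ∈ I := by
  rw [wedge_apply]
  exact sub_mem (I.mul_mem_right _ hv) (I.mul_mem_left _ hw)

lemma wedge_mem_of_snd_mem {I : Ideal R} {v w : R × R} (hv : v.2 ∈ I) (hw : w.2 ∈ I) :
    wedge v w ∈ I := by
  rw [wedge_apply]
  exact sub_mem (I.mul_mem_left _ hw) (I.mul_mem_right _ hv)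

lemma forall_wedge_mem_four_iff {I : Ideal R} {τ₁ τ₂ τ₃ τ₄ : R × R} :
    (∀ v ∈ ({τ₁, τ₂, τ₃, τ₄} : Set (R × R)), ∀ w ∈ ({τ₁, τ₂, τ₃, τ₄} : Set (R × R)),
        wedge v w ∈ I) ↔
      wedge τ₁ τ₂ ∈ I ∧ wedge τ₁ τ₃ ∈ I ∧ wedge τ₁ τ₄ ∈ I ∧ wedge τ₂ τ₃ ∈ I ∧
        wedge τ₂ τ₄ ∈ I ∧ wedge τ₃ τ₄ ∈ I := by
  simp only [Set.mem_insert_iff, Set.mem_singleton_iff, forall_eq_or_imp, forall_eq, wedge_self,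
    wedge_swap τ₁ τ₂, wedge_swap τ₁ τ₃, wedge_swap τ₁ τ₄, wedge_swap τ₂ τ₃, wedge_swap τ₂ τ₄,
    wedge_swap τ₃ τ₄, neg_mem_iff, zero_mem, true_and, and_true]
  tauto

end Wedge

lemma Int.natCast_gcd_mem_iff {I : Ideal ℤ} {a b : ℤ} : (Int.gcd a b : ℤ) ∈ I ↔ a ∈ I ∧ b ∈ I := by
  refine ⟨fun h => ⟨I.mem_of_dvd (Int.gcd_dvd_left a b) h, I.mem_of_dvd (Int.gcd_dvd_right a b) h⟩,
    fun ⟨ha, hb⟩ => ?_⟩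
  rw [Int.gcd_eq_gcd_ab]
  exact add_mem (I.mul_mem_right _ ha) (I.mul_mem_right _ hb)

lemma Nat.eq_one_iff_forall_intCast_mem {n : ℕ} : n = 1 ↔ ∀ I : Ideal ℤ, (n : ℤ) ∈ I → 1 ∈ I := by
  refine ⟨fun h _ => by simp [h], fun h => ?_⟩
  have hdvd := Ideal.mem_span_singleton.1 (h _ (Ideal.mem_span_singleton_self (n : ℤ)))
  exact Nat.dvd_one.1 (by exact_mod_cast hdvd)

theorem span_eq_top_iff_gcd_eq_one (τ₁ τ₂ τ₃ τ₄ : ℤ × ℤ) :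
    Submodule.span ℤ {τ₁, τ₂, τ₃, τ₄} = ⊤ ↔
      (Int.gcd (Int.gcd (Int.gcd τ₁.1 τ₂.1) τ₃.1) τ₄.1 = 1 ∧
       Int.gcd (Int.gcd (Int.gcd τ₁.2 τ₂.2) τ₃.2) τ₄.2 = 1 ∧
       Int.gcd (Int.gcd (Int.gcd (Int.gcd (Int.gcd
           (τ₁.1 * τ₂.2 - τ₁.2 * τ₂.1)
           (τ₁.1 * τ₃.2 - τ₁.2 * τ₃.1))
           (τ₁.1 * τ₄.2 - τ₁.2 * τ₄.1))
           (τ₂.1 * τ₃.2 - τ₂.2 * τ₃.1))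
           (τ₂.1 * τ₄.2 - τ₂.2 * τ₄.1))
           (τ₃.1 * τ₄.2 - τ₃.2 * τ₄.1) = 1) := by
  simp only [Nat.eq_one_iff_forall_intCast_mem, Int.natCast_gcd_mem_iff, and_assoc, ← wedge_apply]
  rw [span_eq_top_iff_forall_wedge_mem]
  simp only [forall_wedge_mem_four_iff]
  refine ⟨fun h => ⟨fun I ⟨h₁, h₂, h₃, h₄⟩ => h I ?_, fun I ⟨h₁, h₂, h₃, h₄⟩ => h I ?_, h⟩,
    fun h => h.2.2⟩
  · exact ⟨wedge_mem_of_fst_mem h₁ h₂, wedge_mem_of_fst_mem h₁ h₃, wedge_mem_of_fst_mem h₁ h₄,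
      wedge_mem_of_fst_mem h₂ h₃, wedge_mem_of_fst_mem h₂ h₄, wedge_mem_of_fst_mem h₃ h₄⟩
  · exact ⟨wedge_mem_of_snd_mem h₁ h₂, wedge_mem_of_snd_mem h₁ h₃, wedge_mem_of_snd_mem h₁ h₄,
      wedge_mem_of_snd_mem h₂ h₃, wedge_mem_of_snd_mem h₂ h₄, wedge_mem_of_snd_mem h₃ h₄⟩

section Normalizer

open Pointwise

variable {G : Type*} [Group G]

theorem Subgroup.exists_zpow_mul_of_mem_closure_insert {S : Subgroup G} {g : G}
    (hg : g ∈ Subgroup.normalizer (S : Set G)) {T : Set G} (hT : T ⊆ S) {x : G}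
    (hx : x ∈ Subgroup.closure (insert g T)) : ∃ n : ℤ, ∃ s ∈ S, x = g ^ n * s := by
  have hle : Subgroup.closure (insert g T) ≤ Subgroup.zpowers g ⊔ S :=
    (Subgroup.closure_le _).2 <| Set.insert_subset (Subgroup.mem_sup_left (Subgroup.mem_zpowers g))
      (hT.trans fun _ hs => Subgroup.mem_sup_right hs)
  have hmul : x ∈ (Subgroup.zpowers g : Set G) * (S : Set G) := by
    rw [← Subgroup.coe_mul_of_left_le_normalizer_right _ _ (Subgroup.zpowers_le.2 hg)]
    exact hle hx
  obtain ⟨y, hy, s, hs, rfl⟩ := hmul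
  obtain ⟨n, rfl⟩ := Subgroup.mem_zpowers_iff.1 hy
  exact ⟨n, s, hs, rfl⟩

end Normalizer

section TranslationSubgroup

variable {G : Type*} [Group G] {u : Multiplicative (ℤ × ℤ) →* G} {g : G}
  {θ : (ℤ × ℤ) →ₗ[ℤ] ℤ × ℤ} {t : ℤ}

lemma map_ofAdd_eq_zpow_mul_zpow (u : Multiplicative (ℤ × ℤ) →* G) (v : ℤ × ℤ) :
    u (ofAdd v) = u (ofAdd (1, 0)) ^ v.1 * u (ofAdd (0, 1)) ^ v.2 := by
  rw [← map_zpow u, ← map_zpow u, ← map_mul u, ← ofAdd_zsmul, ← ofAdd_zsmul, ← ofAdd_add]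
  congr 2
  ext <;> simp

def latticeImage (u : Multiplicative (ℤ × ℤ) →* G) (Λ : Submodule ℤ (ℤ × ℤ)) : Subgroup G :=
  Λ.toAddSubgroup.toSubgroup.map u

lemma mem_latticeImage {Λ : Submodule ℤ (ℤ × ℤ)} {x : G} :
    x ∈ latticeImage u Λ ↔ ∃ v ∈ Λ, u (ofAdd v) = x := by
  simp [latticeImage]

lemma inv_mul_map_ofAdd_mul (hconj : ∀ v, g * u (ofAdd v) * g⁻¹ = u (ofAdd (θ v)))
    (hθ : ∀ v, θ (θ v) = t • θ v - v) (v : ℤ × ℤ) :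
    g⁻¹ * u (ofAdd v) * g = u (ofAdd (t • v - θ v)) := by
  have h := hconj (t • v - θ v)
  rw [map_sub θ, map_smul θ, hθ, sub_sub_cancel] at h
  rw [← h]
  group

lemma mem_normalizer_latticeImage (hconj : ∀ v, g * u (ofAdd v) * g⁻¹ = u (ofAdd (θ v)))
    (hθ : ∀ v, θ (θ v) = t • θ v - v) {Λ : Submodule ℤ (ℤ × ℤ)} (hΛ : ∀ v ∈ Λ, θ v ∈ Λ) :
    g ∈ Subgroup.normalizer (latticeImage u Λ : Set G) := by
  refine Subgroup.mem_normalizer_iff.2 fun x => ⟨?_, fun hx => ?_⟩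
  · rintro ⟨v, hv, rfl⟩
    exact mem_latticeImage.2 ⟨θ v, hΛ v hv, (hconj v).symm⟩
  · obtain ⟨v, hv, hxv⟩ := mem_latticeImage.1 hx
    have hx' : x = g⁻¹ * u (ofAdd v) * g := by rw [hxv]; group
    rw [hx', inv_mul_map_ofAdd_mul hconj hθ]
    exact mem_latticeImage.2 ⟨_, sub_mem (Λ.smul_mem t hv) (hΛ v hv), rfl⟩

lemma apply_mem_span_of_mem_span (hθ : ∀ v, θ (θ v) = t • θ v - v) {τ₁ τ₂ v : ℤ × ℤ}
    (hv : v ∈ Submodule.span ℤ {τ₁, τ₂, θ τ₁, θ τ₂}) :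
    θ v ∈ Submodule.span ℤ {τ₁, τ₂, θ τ₁, θ τ₂} := by
  set Λ := Submodule.span ℤ {τ₁, τ₂, θ τ₁, θ τ₂}
  have hgen : ∀ w ∈ ({τ₁, τ₂, θ τ₁, θ τ₂} : Set (ℤ × ℤ)), w ∈ Λ := fun w hw =>
    Submodule.subset_span hw
  have hθθ : ∀ w ∈ ({τ₁, τ₂} : Set (ℤ × ℤ)), θ (θ w) ∈ Λ := fun w hw => by
    rw [hθ]
    exact sub_mem (Λ.smul_mem t (hgen _ (by aesop))) (hgen _ (by aesop))
  refine (Submodule.span_le (p := Λ.comap θ)).2 ?_ hv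
  simp only [Set.insert_subset_iff, Set.singleton_subset_iff, SetLike.mem_coe,
    Submodule.mem_comap]
  exact ⟨hgen _ (by simp), hgen _ (by simp), hθθ _ (by simp), hθθ _ (by simp)⟩

theorem mem_closure_of_mem_span (hconj : ∀ v, g * u (ofAdd v) * g⁻¹ = u (ofAdd (θ v)))
    {τ₁ τ₂ w : ℤ × ℤ} (hw : w ∈ Submodule.span ℤ {τ₁, τ₂, θ τ₁, θ τ₂}) :
    u (ofAdd w) ∈ Subgroup.closure {g, u (ofAdd τ₁), u (ofAdd τ₂)} := by
  set H := Subgroup.closure {g, u (ofAdd τ₁), u (ofAdd τ₂)}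
  have hg : g ∈ H := Subgroup.subset_closure (by simp)
  have h₁ : u (ofAdd τ₁) ∈ H := Subgroup.subset_closure (by simp)
  have h₂ : u (ofAdd τ₂) ∈ H := Subgroup.subset_closure (by simp)
  have hconj_mem : ∀ v, u (ofAdd v) ∈ H → u (ofAdd (θ v)) ∈ H := fun v hv => by
    rw [← hconj]
    exact mul_mem (mul_mem hg hv) (inv_mem hg)
  refine (Submodule.span_le (p := (H.comap u).toAddSubgroup'.toIntSubmodule)).2 ?_ hw
  simp only [Set.insert_subset_iff, Set.singleton_subset_iff, SetLike.mem_coe]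
  exact ⟨h₁, h₂, hconj_mem _ h₁, hconj_mem _ h₂⟩

theorem mem_span_of_mem_closure (hu : Function.Injective u)
    (hconj : ∀ v, g * u (ofAdd v) * g⁻¹ = u (ofAdd (θ v))) (hθ : ∀ v, θ (θ v) = t • θ v - v)
    (hfree : ∀ n : ℤ, g ^ n ∈ u.range → n = 0) {τ₁ τ₂ w : ℤ × ℤ}
    (hw : u (ofAdd w) ∈ Subgroup.closure {g, u (ofAdd τ₁), u (ofAdd τ₂)}) :
    w ∈ Submodule.span ℤ {τ₁, τ₂, θ τ₁, θ τ₂} := by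
  set Λ := Submodule.span ℤ {τ₁, τ₂, θ τ₁, θ τ₂}
  have hT : {u (ofAdd τ₁), u (ofAdd τ₂)} ⊆ (latticeImage u Λ : Set G) := by
    simp only [Set.insert_subset_iff, Set.singleton_subset_iff, SetLike.mem_coe]
    exact ⟨mem_latticeImage.2 ⟨τ₁, Submodule.subset_span (by simp), rfl⟩,
      mem_latticeImage.2 ⟨τ₂, Submodule.subset_span (by simp), rfl⟩⟩
  obtain ⟨n, s, hs, hws⟩ := Subgroup.exists_zpow_mul_of_mem_closure_insert
    (mem_normalizer_latticeImage hconj hθ fun v => apply_mem_span_of_mem_span hθ) hT hw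
  obtain ⟨v, hv, rfl⟩ := mem_latticeImage.1 hs
  have hn : n = 0 := hfree n ⟨ofAdd (w - v), by
    rw [ofAdd_sub, map_div, hws, mul_div_cancel_right]⟩
  rw [hn, zpow_zero, one_mul] at hws
  rwa [ofAdd.injective (hu hws)]

lemma conj_mul_map_ofAdd {a : G} (hconj : ∀ v, a * u (ofAdd v) * a⁻¹ = u (ofAdd (θ v)))
    (t₀ v : ℤ × ℤ) :
    a * u (ofAdd t₀) * u (ofAdd v) * (a * u (ofAdd t₀))⁻¹ = u (ofAdd (θ v)) := by
  have hcomm : u (ofAdd t₀) * u (ofAdd v) * (u (ofAdd t₀))⁻¹ = u (ofAdd v) := by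
    rw [← map_mul, mul_comm, map_mul, mul_inv_cancel_right]
  calc a * u (ofAdd t₀) * u (ofAdd v) * (a * u (ofAdd t₀))⁻¹
      = a * (u (ofAdd t₀) * u (ofAdd v) * (u (ofAdd t₀))⁻¹) * a⁻¹ := by group
    _ = u (ofAdd (θ v)) := by rw [hcomm, hconj]

theorem closure_eq_closure_iff {a : G} (hu : Function.Injective u)
    (hconj : ∀ v, a * u (ofAdd v) * a⁻¹ = u (ofAdd (θ v))) (hθ : ∀ v, θ (θ v) = t • θ v - v)
    {t₀ τ₁ τ₂ : ℤ × ℤ} (hfree : ∀ n : ℤ, (a * u (ofAdd t₀)) ^ n ∈ u.range → n = 0) :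
    Subgroup.closure {a * u (ofAdd t₀), u (ofAdd τ₁), u (ofAdd τ₂)} =
        Subgroup.closure {a, u (ofAdd (1, 0)), u (ofAdd (0, 1))} ↔
      Submodule.span ℤ {τ₁, τ₂, θ τ₁, θ τ₂} = ⊤ := by
  set H := Subgroup.closure {a * u (ofAdd t₀), u (ofAdd τ₁), u (ofAdd τ₂)}
  set D := Subgroup.closure {a, u (ofAdd (1, 0)), u (ofAdd (0, 1))}
  have ha : a ∈ D := Subgroup.subset_closure (by simp)
  have hu_mem : ∀ v, u (ofAdd v) ∈ D := fun v => by
    rw [map_ofAdd_eq_zpow_mul_zpow]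
    exact mul_mem (zpow_mem (Subgroup.subset_closure (by simp)) _)
      (zpow_mem (Subgroup.subset_closure (by simp)) _)
  constructor
  · intro hHD
    have hspan : ∀ v, u (ofAdd v) ∈ H → v ∈ Submodule.span ℤ {τ₁, τ₂, θ τ₁, θ τ₂} :=
      fun v hv => mem_span_of_mem_closure hu (conj_mul_map_ofAdd hconj t₀) hθ hfree hv
    refine Submodule.eq_top_iff'.2 fun v => ?_
    have hv : v = v.1 • ((1, 0) : ℤ × ℤ) + v.2 • ((0, 1) : ℤ × ℤ) := by ext <;> simp
    rw [hv]
    exact add_mem (Submodule.smul_mem _ _ (hspan _ (hHD ▸ hu_mem _)))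
      (Submodule.smul_mem _ _ (hspan _ (hHD ▸ hu_mem _)))
  · intro hΛ
    have hu_mem' : ∀ v, u (ofAdd v) ∈ H := fun v =>
      mem_closure_of_mem_span (conj_mul_map_ofAdd hconj t₀) (hΛ ▸ Submodule.mem_top)
    refine le_antisymm ((Subgroup.closure_le _).2 ?_) ((Subgroup.closure_le _).2 ?_)
    · simp only [Set.insert_subset_iff, Set.singleton_subset_iff, SetLike.mem_coe]
      exact ⟨mul_mem ha (hu_mem _), hu_mem _, hu_mem _⟩
    · simp only [Set.insert_subset_iff, Set.singleton_subset_iff, SetLike.mem_coe]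
      refine ⟨?_, hu_mem' _, hu_mem' _⟩
      simpa using mul_mem (Subgroup.subset_closure (by simp) : a * u (ofAdd t₀) ∈ H)
        (inv_mem (hu_mem' t₀))

end TranslationSubgroup

section Matrices

def mulVecProd (θ : Matrix (Fin 2) (Fin 2) ℤ) : (ℤ × ℤ) →ₗ[ℤ] ℤ × ℤ where
  toFun v := (θ 0 0 * v.1 + θ 0 1 * v.2, θ 1 0 * v.1 + θ 1 1 * v.2)
  map_add' v w := by ext <;> simp only [Prod.fst_add, Prod.snd_add] <;> ring
  map_smul' c v := by
    ext <;> simp only [Prod.smul_fst, Prod.smul_snd, smul_eq_mul, RingHom.id_apply] <;> ring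

/-- Cayley–Hamilton for `θ ∈ SL₂(ℤ)`. -/
lemma mulVecProd_mulVecProd {θ : Matrix (Fin 2) (Fin 2) ℤ} (hdet : θ.det = 1) (v : ℤ × ℤ) :
    mulVecProd θ (mulVecProd θ v) = θ.trace • mulVecProd θ v - v := by
  rw [Matrix.det_fin_two] at hdet
  ext <;> simp only [mulVecProd, LinearMap.coe_mk, AddHom.coe_mk, Prod.smul_fst, Prod.smul_snd,
    Prod.fst_sub, Prod.snd_sub, smul_eq_mul, Matrix.trace_fin_two]
  · linear_combination -v.1 * hdet
  · linear_combination -v.2 * hdet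

def translation (v : ℤ × ℤ) : Matrix (Fin 4) (Fin 4) ℝ :=
  !![1, 0, 0, (v.1 : ℝ); 0, 1, 0, (v.2 : ℝ); 0, 0, 1, 0; 0, 0, 0, 1]

lemma translation_add (v w : ℤ × ℤ) :
    translation (v + w) = translation v * translation w := by
  ext i j
  fin_cases i <;> fin_cases j <;> simp [translation, Matrix.mul_apply, Fin.sum_univ_four] <;> ring

lemma translation_zero : translation 0 = 1 := by
  ext i j
  fin_cases i <;> fin_cases j <;> simp [translation]

def translationHom : Multiplicative (ℤ × ℤ) →* (Matrix (Fin 4) (Fin 4) ℝ)ˣ :=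
  MonoidHom.toHomUnits
    { toFun := fun v => translation v.toAdd
      map_one' := translation_zero
      map_mul' := fun v w => translation_add v.toAdd w.toAdd }

lemma translationHom_injective : Function.Injective translationHom := by
  intro v w h
  have h' := congrArg Units.val h
  have h₁ := congrFun (congrFun h' 0) 3
  have h₂ := congrFun (congrFun h' 1) 3
  simp [translationHom, translation] at h₁ h₂
  exact toAdd.injective (Prod.ext h₁ h₂)

def matrixA (θ : Matrix (Fin 2) (Fin 2) ℤ) : Matrix (Fin 4) (Fin 4) ℝ :=
  !![(θ 0 0 : ℝ), (θ 0 1 : ℝ), 0, 0;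
     (θ 1 0 : ℝ), (θ 1 1 : ℝ), 0, 0;
     0, 0, 1, 1;
     0, 0, 0, 1]

lemma matrixA_mul_translation (θ : Matrix (Fin 2) (Fin 2) ℤ) (v : ℤ × ℤ) :
    matrixA θ * translation v = translation (mulVecProd θ v) * matrixA θ := by
  ext i j
  fin_cases i <;> fin_cases j <;>
    simp [matrixA, translation, mulVecProd, Matrix.mul_apply, Fin.sum_univ_four]

def levelRow (x : ℝ) : Fin 4 → ℝ := ![0, 0, 1, x]

lemma levelRow_vecMul_matrixA (θ : Matrix (Fin 2) (Fin 2) ℤ) (x : ℝ) :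
    levelRow x ᵥ* matrixA θ = levelRow (x + 1) := by
  ext j
  fin_cases j <;> simp [levelRow, matrixA, Matrix.vecMul, dotProduct, Fin.sum_univ_four, add_comm]

lemma levelRow_vecMul_translation (v : ℤ × ℤ) (x : ℝ) :
    levelRow x ᵥ* translation v = levelRow x := by
  ext j
  fin_cases j <;> simp [levelRow, translation, Matrix.vecMul, dotProduct, Fin.sum_univ_four]

lemma levelRow_vecMul_zpow {g : (Matrix (Fin 4) (Fin 4) ℝ)ˣ}
    (hg : ∀ x, levelRow x ᵥ* (g : Matrix (Fin 4) (Fin 4) ℝ) = levelRow (x + 1)) (n : ℤ) (x : ℝ) :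
    levelRow x ᵥ* ((g ^ n : (Matrix (Fin 4) (Fin 4) ℝ)ˣ) : Matrix (Fin 4) (Fin 4) ℝ) =
      levelRow (x + n) := by
  induction n using Int.induction_on generalizing x with
  | zero => simp
  | succ n ih =>
    rw [_root_.zpow_add_one, Units.val_mul, ← vecMul_vecMul, ih, hg]
    push_cast; ring_nf
  | pred n ih =>
    have hinv : ∀ y, levelRow y ᵥ* ((g⁻¹ : (Matrix (Fin 4) (Fin 4) ℝ)ˣ) : Matrix (Fin 4) (Fin 4) ℝ)
        = levelRow (y - 1) := fun y => by
      rw [← sub_add_cancel y 1, ← hg, vecMul_vecMul, Units.mul_inv, vecMul_one,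
        add_sub_cancel_right]
    rw [_root_.zpow_sub_one, Units.val_mul, ← vecMul_vecMul, ih, hinv]
    push_cast; ring_nf

lemma eq_zero_of_zpow_mem_range {g : (Matrix (Fin 4) (Fin 4) ℝ)ˣ}
    (hg : ∀ x, levelRow x ᵥ* (g : Matrix (Fin 4) (Fin 4) ℝ) = levelRow (x + 1)) {n : ℤ}
    (hn : g ^ n ∈ translationHom.range) : n = 0 := by
  obtain ⟨v, hv⟩ := hn
  have h := levelRow_vecMul_zpow hg n 0
  rw [← hv] at h
  have h₃ := congrFun (h.symm.trans (levelRow_vecMul_translation v.toAdd 0)) 3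
  simpa [levelRow] using h₃

end Matrices

theorem stmt_17_general (θ : Matrix (Fin 2) (Fin 2) ℤ) (hdet : θ.det = 1)
    (A B C : (Matrix (Fin 4) (Fin 4) ℝ)ˣ)
    (hA : (A : Matrix (Fin 4) (Fin 4) ℝ) =
      !![(θ 0 0 : ℝ), (θ 0 1 : ℝ), 0, 0;
         (θ 1 0 : ℝ), (θ 1 1 : ℝ), 0, 0;
         0, 0, 1, 1;
         0, 0, 0, 1])
    (hB : (B : Matrix (Fin 4) (Fin 4) ℝ) = 1 + Matrix.single 0 3 (1 : ℝ))
    (hC : (C : Matrix (Fin 4) (Fin 4) ℝ) = 1 + Matrix.single 1 3 (1 : ℝ))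
    (β₁ γ₁ β₂ γ₂ β₃ γ₃ : ℤ)
    (g₁ g₂ g₃ : (Matrix (Fin 4) (Fin 4) ℝ)ˣ)
    (hg₁ : g₁ = A * B ^ β₁ * C ^ γ₁)
    (hg₂ : g₂ = B ^ β₂ * C ^ γ₂)
    (hg₃ : g₃ = B ^ β₃ * C ^ γ₃)
    (τ₁ τ₂ τ₃ τ₄ : ℤ × ℤ)
    (hτ₁ : τ₁ = (β₂, γ₂)) (hτ₂ : τ₂ = (β₃, γ₃))
    (hτ₃ : τ₃ = (θ 0 0 * β₂ + θ 0 1 * γ₂, θ 1 0 * β₂ + θ 1 1 * γ₂))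
    (hτ₄ : τ₄ = (θ 0 0 * β₃ + θ 0 1 * γ₃, θ 1 0 * β₃ + θ 1 1 * γ₃)) :
    Subgroup.closure ({g₁, g₂, g₃} : Set (Matrix (Fin 4) (Fin 4) ℝ)ˣ) =
        Subgroup.closure ({A, B, C} : Set (Matrix (Fin 4) (Fin 4) ℝ)ˣ) ↔
      (Int.gcd (Int.gcd (Int.gcd τ₁.1 τ₂.1) τ₃.1) τ₄.1 = 1 ∧
       Int.gcd (Int.gcd (Int.gcd τ₁.2 τ₂.2) τ₃.2) τ₄.2 = 1 ∧
       Int.gcd (Int.gcd (Int.gcd (Int.gcd (Int.gcd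
           (τ₁.1 * τ₂.2 - τ₁.2 * τ₂.1)
           (τ₁.1 * τ₃.2 - τ₁.2 * τ₃.1))
           (τ₁.1 * τ₄.2 - τ₁.2 * τ₄.1))
           (τ₂.1 * τ₃.2 - τ₂.2 * τ₃.1))
           (τ₂.1 * τ₄.2 - τ₂.2 * τ₄.1))
           (τ₃.1 * τ₄.2 - τ₃.2 * τ₄.1) = 1) := by
  set u := translationHom
  have hA' : (A : Matrix (Fin 4) (Fin 4) ℝ) = matrixA θ := hA
  have hB' : B = u (ofAdd (1, 0)) := Units.ext <| hB.trans <| by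
    ext i j; fin_cases i <;> fin_cases j <;> simp [u, translationHom, translation, Matrix.single]
  have hC' : C = u (ofAdd (0, 1)) := Units.ext <| hC.trans <| by
    ext i j; fin_cases i <;> fin_cases j <;> simp [u, translationHom, translation, Matrix.single]
  have hconj : ∀ v, A * u (ofAdd v) * A⁻¹ = u (ofAdd (mulVecProd θ v)) := fun v =>
    mul_inv_eq_of_eq_mul <| Units.ext <| by
      simp [u, translationHom, hA', matrixA_mul_translation]
  have hfree : ∀ n : ℤ, (A * u (ofAdd (β₁, γ₁))) ^ n ∈ u.range → n = 0 := fun n =>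
    eq_zero_of_zpow_mem_range fun x => by
      rw [Units.val_mul, ← vecMul_vecMul, hA', levelRow_vecMul_matrixA]
      exact levelRow_vecMul_translation _ _
  have hg₁' : g₁ = A * u (ofAdd (β₁, γ₁)) := by
    rw [hg₁, mul_assoc, map_ofAdd_eq_zpow_mul_zpow u (β₁, γ₁), hB', hC']
  have hg₂' : g₂ = u (ofAdd τ₁) := by rw [hg₂, hτ₁, map_ofAdd_eq_zpow_mul_zpow, hB', hC']
  have hg₃' : g₃ = u (ofAdd τ₂) := by rw [hg₃, hτ₂, map_ofAdd_eq_zpow_mul_zpow, hB', hC']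
  have hθτ₁ : mulVecProd θ τ₁ = τ₃ := by rw [hτ₃, hτ₁]; rfl
  have hθτ₂ : mulVecProd θ τ₂ = τ₄ := by rw [hτ₄, hτ₂]; rfl
  rw [hg₁', hg₂', hg₃', hB', hC', closure_eq_closure_iff translationHom_injective hconj
    (mulVecProd_mulVecProd hdet) hfree, hθτ₁, hθτ₂]
  exact span_eq_top_iff_gcd_eq_one τ₁ τ₂ τ₃ τ₄

/-- With g₁ = A·B^{β₁}C^{γ₁}, g₂ = B^{β₂}C^{γ₂}, g₃ = B^{β₃}C^{γ₃} and
τ₁ = (β₂,γ₂), τ₂ = (β₃,γ₃), τ₃ = θτ₁, τ₄ = θτ₂, the subgroup generated by g₁,g₂,g₃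
equals D_m = ⟨A,B,C⟩ iff the gcd of the first components of the τᵢ is 1, the gcd of
their second components is 1, and the gcd of the six cross products τᵢ ∧ τⱼ is 1. -/
theorem stmt_17 (θ : Matrix (Fin 2) (Fin 2) ℤ) (hdet : θ.det = 1)
    (htr : θ.trace = -2 ∨ θ.trace = -1 ∨ θ.trace = 0 ∨ θ.trace = 1)
    (A B C : (Matrix (Fin 4) (Fin 4) ℝ)ˣ)
    (hA : (A : Matrix (Fin 4) (Fin 4) ℝ) =
      !![(θ 0 0 : ℝ), (θ 0 1 : ℝ), 0, 0;
         (θ 1 0 : ℝ), (θ 1 1 : ℝ), 0, 0;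
         0, 0, 1, 1;
         0, 0, 0, 1])
    (hB : (B : Matrix (Fin 4) (Fin 4) ℝ) = 1 + Matrix.single 0 3 (1 : ℝ))
    (hC : (C : Matrix (Fin 4) (Fin 4) ℝ) = 1 + Matrix.single 1 3 (1 : ℝ))
    (β₁ γ₁ β₂ γ₂ β₃ γ₃ : ℤ)
    (g₁ g₂ g₃ : (Matrix (Fin 4) (Fin 4) ℝ)ˣ)
    (hg₁ : g₁ = A * B ^ β₁ * C ^ γ₁)
    (hg₂ : g₂ = B ^ β₂ * C ^ γ₂)
    (hg₃ : g₃ = B ^ β₃ * C ^ γ₃)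
    (τ₁ τ₂ τ₃ τ₄ : ℤ × ℤ)
    (hτ₁ : τ₁ = (β₂, γ₂)) (hτ₂ : τ₂ = (β₃, γ₃))
    (hτ₃ : τ₃ = (θ 0 0 * β₂ + θ 0 1 * γ₂, θ 1 0 * β₂ + θ 1 1 * γ₂))
    (hτ₄ : τ₄ = (θ 0 0 * β₃ + θ 0 1 * γ₃, θ 1 0 * β₃ + θ 1 1 * γ₃)) :
    Subgroup.closure ({g₁, g₂, g₃} : Set (Matrix (Fin 4) (Fin 4) ℝ)ˣ) =
        Subgroup.closure ({A, B, C} : Set (Matrix (Fin 4) (Fin 4) ℝ)ˣ) ↔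
      (Int.gcd (Int.gcd (Int.gcd τ₁.1 τ₂.1) τ₃.1) τ₄.1 = 1 ∧
       Int.gcd (Int.gcd (Int.gcd τ₁.2 τ₂.2) τ₃.2) τ₄.2 = 1 ∧
       Int.gcd (Int.gcd (Int.gcd (Int.gcd (Int.gcd
           (τ₁.1 * τ₂.2 - τ₁.2 * τ₂.1)
           (τ₁.1 * τ₃.2 - τ₁.2 * τ₃.1))
           (τ₁.1 * τ₄.2 - τ₁.2 * τ₄.1))
           (τ₂.1 * τ₃.2 - τ₂.2 * τ₃.1))
           (τ₂.1 * τ₄.2 - τ₂.2 * τ₄.1))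
           (τ₃.1 * τ₄.2 - τ₃.2 * τ₄.1) = 1) :=
  stmt_17_general θ hdet A B C hA hB hC β₁ γ₁ β₂ γ₂ β₃ γ₃ g₁ g₂ g₃ hg₁ hg₂ hg₃ τ₁ τ₂ τ₃ τ₄ hτ₁ hτ₂
    hτ₃ hτ₄
end
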